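/- Assume the running cost f satisfies Assumptions (A) and (B). Let V̂ be continuously differentiable on a neighborhood of [0,T] × Ŝ_d with L̂[V̂](t,η) = 0 for all (t,η) ∈ [0,T] × Ŝ_d and V̂(T,η) = Ĝ(η) for all η ∈ Ŝ_d. Suppose that for each n ∈ ℕ, φ̂^n is continuously differentiable on a neighborhood of [0,T] × Ŝ_d and that max_{(t,η) ∈ [0,T]×Ŝ_d} |L̂[φ̂^n](t,η)| + max_{η ∈ Ŝ_d} |φ̂^n(T,η) − Ĝ(η)| → 0 as n → ∞. Then sup_{(t,η) ∈ [0,T]×Ŝ_d} |φ̂^n(t,η) − V̂(t,η)| → 0 as n → ∞. -/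

import Mathlib

open scoped BigOperators RealInnerProductSpace Topology
noncomputable section

/-- The (d-1)-dimensional probability simplex in ℝ^d. -/
def simplexSet (d : ℕ) : Set (EuclideanSpace ℝ (Fin d)) :=
  {m | (∀ i, 0 ≤ m i) ∧ ∑ i, m i = 1}

/-- The cube of admissible controls `[0,M]^d`. -/
def controlCube (d : ℕ) (M : ℝ) : Set (EuclideanSpace ℝ (Fin d)) :=
  {a | ∀ k, a k ∈ Set.Icc (0:ℝ) M}

/-- The Hamiltonian `H^i(t,m,z) = sup_{a ∈ [0,M]^d} ( -∑_{k≠i} a_k z_k - f(t,i,a,m) )`. -/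
def Ham (d : ℕ) (M : ℝ)
    (f : ℝ → Fin d → EuclideanSpace ℝ (Fin d) → EuclideanSpace ℝ (Fin d) → ℝ)
    (i : Fin d) (t : ℝ) (m : EuclideanSpace ℝ (Fin d)) (z : EuclideanSpace ℝ (Fin d)) : ℝ :=
  sSup ((fun a : EuclideanSpace ℝ (Fin d) =>
    -∑ k ∈ Finset.univ.erase i, a k * z k - f t i a m) '' controlCube d M)

/-- The projected simplex `Ŝ_d ⊂ ℝ^{d-1}`. -/
def hatSimplexSet (d : ℕ) : Set (EuclideanSpace ℝ (Fin (d - 1))) :=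
  {η | (∀ j, 0 ≤ η j) ∧ ∑ j, η j ≤ 1}

/-- The embedding `η ↦ (η, η^{-d})` of `Ŝ_d` into `S_d`, where `η^{-d} = 1 - ∑_j η_j`. -/
def embedSimplex (d : ℕ) (η : EuclideanSpace ℝ (Fin (d - 1))) : EuclideanSpace ℝ (Fin d) :=
  (EuclideanSpace.equiv (Fin d) ℝ).symm fun j =>
    if hj : (j : ℕ) < d - 1 then η ⟨j, hj⟩ else 1 - ∑ k, η k

/-- The lift of a gradient `p ∈ ℝ^{d-1}` appearing in the modified Hamiltonians: for
`i < d-1` it is `(p_1 - p_i, …, p_{d-1} - p_i, -p_i)`, and for `i = d` it is `(p, 0)`. -/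
def liftVecAll (d : ℕ) (i : Fin d) (p : EuclideanSpace ℝ (Fin (d - 1))) :
    EuclideanSpace ℝ (Fin d) :=
  (EuclideanSpace.equiv (Fin d) ℝ).symm fun j =>
    if hi : (i : ℕ) < d - 1 then
      (if hj : (j : ℕ) < d - 1 then p ⟨j, hj⟩ else 0) - p ⟨i, hi⟩
    else
      if hj : (j : ℕ) < d - 1 then p ⟨j, hj⟩ else 0

/-- The modified Hamiltonians `Ĥ^i(t,η,p)` on `[0,T] × Ŝ_d × ℝ^{d-1}`. -/
def hatHam (d : ℕ) (M : ℝ)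
    (f : ℝ → Fin d → EuclideanSpace ℝ (Fin d) → EuclideanSpace ℝ (Fin d) → ℝ)
    (i : Fin d) (t : ℝ) (η : EuclideanSpace ℝ (Fin (d - 1)))
    (p : EuclideanSpace ℝ (Fin (d - 1))) : ℝ :=
  Ham d M f i t (embedSimplex d η) (liftVecAll d i p)

/-- The transformed HJB operator
`L̂[φ](t,η) = -∂_t φ(t,η) + ∑_{i<d} (η,η^{-d})_i Ĥ^i(t,η,∇_η φ(t,η))`. -/
def hatHJBop (d : ℕ) (M : ℝ)
    (f : ℝ → Fin d → EuclideanSpace ℝ (Fin d) → EuclideanSpace ℝ (Fin d) → ℝ)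
    (φ : ℝ → EuclideanSpace ℝ (Fin (d - 1)) → ℝ) (t : ℝ)
    (η : EuclideanSpace ℝ (Fin (d - 1))) : ℝ :=
  -(deriv (fun s => φ s η) t) +
    ∑ i, embedSimplex d η i * hatHam d M f i t η (gradient (φ t) η)

/-- The transformed terminal condition `Ĝ(η) = ∑_i (η,η^{-d})_i g^i(η,η^{-d})`. -/
def hatG (d : ℕ) (g : Fin d → EuclideanSpace ℝ (Fin d) → ℝ)
    (η : EuclideanSpace ℝ (Fin (d - 1))) : ℝ :=
  ∑ i, embedSimplex d η i * g i (embedSimplex d η)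

/-- `h` is continuously differentiable on an open neighborhood of `[0,T] × Ŝ_d`. -/
def hatC1OnNbhd (d : ℕ) (T : ℝ) (h : ℝ → EuclideanSpace ℝ (Fin (d - 1)) → ℝ) : Prop :=
  ∃ U : Set (ℝ × EuclideanSpace ℝ (Fin (d - 1))), IsOpen U ∧
    Set.Icc (0:ℝ) T ×ˢ hatSimplexSet d ⊆ U ∧ ContDiffOn ℝ 1 (fun p => h p.1 p.2) U

/-- Assumption (A): `F(t,a,m) = ∑_i m_i f(t,i,a^i,m)` is continuous and Lipschitz in `(t,m)`,
uniformly in the controls. -/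
def AssumptionA (d : ℕ) (T M : ℝ)
    (f : ℝ → Fin d → EuclideanSpace ℝ (Fin d) → EuclideanSpace ℝ (Fin d) → ℝ) : Prop :=
  Continuous (fun q : ℝ × (Fin d → EuclideanSpace ℝ (Fin d)) × EuclideanSpace ℝ (Fin d) =>
    ∑ i, q.2.2 i * f q.1 i (q.2.1 i) q.2.2) ∧
  ∃ C : ℝ, 0 < C ∧ ∀ t ∈ Set.Icc (0:ℝ) T, ∀ s ∈ Set.Icc (0:ℝ) T,
    ∀ a : Fin d → EuclideanSpace ℝ (Fin d), (∀ i, a i ∈ controlCube d M) →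
    ∀ m ∈ simplexSet d, ∀ p ∈ simplexSet d,
      |∑ i, m i * f t i (a i) m - ∑ i, p i * f s i (a i) p| ≤ C * (|t - s| + ‖m - p‖)

/-- Assumption (B): the running cost is continuously differentiable in the control, its
control-gradient is Lipschitz in `m`, and it is strongly convex in the control. -/
def AssumptionB (d : ℕ) (T M : ℝ)
    (f : ℝ → Fin d → EuclideanSpace ℝ (Fin d) → EuclideanSpace ℝ (Fin d) → ℝ) : Prop :=
  (∀ i : Fin d, ∀ t ∈ Set.Icc (0:ℝ) T, ∀ m ∈ simplexSet d,
    ContDiff ℝ 1 (fun a => f t i a m)) ∧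
  (∃ L : ℝ, 0 < L ∧ ∀ i : Fin d, ∀ t ∈ Set.Icc (0:ℝ) T, ∀ a ∈ controlCube d M,
    ∀ m ∈ simplexSet d, ∀ p ∈ simplexSet d,
      ‖gradient (fun a' => f t i a' m) a - gradient (fun a' => f t i a' p) a‖ ≤ L * ‖m - p‖) ∧
  (∃ lam : ℝ, 0 < lam ∧ ∀ i : Fin d, ∀ t ∈ Set.Icc (0:ℝ) T, ∀ m ∈ simplexSet d,
    ∀ a ∈ controlCube d M, ∀ b ∈ controlCube d M,
      f t i b m ≥ f t i a m + ⟪gradient (fun a' => f t i a' m) a, b - a⟫ + lam * ‖b - a‖ ^ 2)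

namespace DGM

open Filter Set Finset

lemma equiv_symm_apply {n : ℕ} (f : Fin n → ℝ) (k : Fin n) :
    (EuclideanSpace.equiv (Fin n) ℝ).symm f k = f k := rfl

/-- inclusion `Fin (d-1) → Fin d`. -/
def fd (d : ℕ) : Fin (d - 1) → Fin d := Fin.castLE (Nat.sub_le d 1)

/-- extension of a vector in `ℝ^{d-1}` by zero. -/
def tExt (d : ℕ) (r : EuclideanSpace ℝ (Fin (d - 1))) : Fin d → ℝ :=
  fun k => if h : (k : ℕ) < d - 1 then r ⟨k, h⟩ else 0

lemma lift_apply (d : ℕ) (i : Fin d) (r : EuclideanSpace ℝ (Fin (d - 1))) (k : Fin d) :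
    liftVecAll d i r k = tExt d r k - tExt d r i := by
  by_cases hi : (i : ℕ) < d - 1 <;>
    simp [liftVecAll, equiv_symm_apply, tExt, hi]

lemma embed_apply (d : ℕ) (η : EuclideanSpace ℝ (Fin (d - 1))) (k : Fin d) :
    embedSimplex d η k = if h : (k : ℕ) < d - 1 then η ⟨k, h⟩ else 1 - ∑ j, η j := rfl

lemma embed_fd (d : ℕ) (η : EuclideanSpace ℝ (Fin (d - 1))) (j : Fin (d - 1)) :
    embedSimplex d η (fd d j) = η j := by
  have h : ((fd d j : Fin d) : ℕ) < d - 1 := j.isLt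
  rw [embed_apply, dif_pos h]
  rfl

lemma embed_last (d : ℕ) (hd : 1 ≤ d) (η : EuclideanSpace ℝ (Fin (d - 1))) :
    embedSimplex d η ⟨d - 1, by omega⟩ = 1 - ∑ j, η j := by
  rw [embed_apply, dif_neg (by simp)]

lemma tExt_fd (d : ℕ) (r : EuclideanSpace ℝ (Fin (d - 1))) (j : Fin (d - 1)) :
    tExt d r (fd d j) = r j := by
  have h : ((fd d j : Fin d) : ℕ) < d - 1 := j.isLt
  rw [tExt, dif_pos h]
  rfl

lemma tExt_last (d : ℕ) (hd : 1 ≤ d) (r : EuclideanSpace ℝ (Fin (d - 1))) :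
    tExt d r ⟨d - 1, by omega⟩ = 0 := by
  rw [tExt, dif_neg (by simp)]

lemma sum_fin_split (d : ℕ) (hd : 1 ≤ d) (g : Fin d → ℝ) :
    ∑ k, g k = (∑ j, g (fd d j)) + g ⟨d - 1, by omega⟩ := by
  have h : d - 1 + 1 = d := by omega
  rw [← Equiv.sum_comp (finCongr h) g, Fin.sum_univ_castSucc]
  rfl

lemma embed_mem_simplex (d : ℕ) (hd : 1 ≤ d) {η : EuclideanSpace ℝ (Fin (d - 1))}
    (hη : η ∈ hatSimplexSet d) : embedSimplex d η ∈ simplexSet d := by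
  obtain ⟨h0, h1⟩ := hη
  constructor
  · intro k
    rw [embed_apply]
    split_ifs with h
    · exact h0 _
    · linarith
  · rw [sum_fin_split d hd, embed_last d hd]
    have : ∀ j ∈ Finset.univ, embedSimplex d η (fd d j) = η j := fun j _ => embed_fd d η j
    rw [Finset.sum_congr rfl this]
    ring

lemma zero_mem_hatSimplex (d : ℕ) : (0 : EuclideanSpace ℝ (Fin (d - 1))) ∈ hatSimplexSet d := by
  constructor
  · intro j; simp
  · simp

lemma zero_mem_cube (d : ℕ) {M : ℝ} (hM : 0 ≤ M) : (0 : EuclideanSpace ℝ (Fin d)) ∈ controlCube d M := by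
  intro k; simp [hM]

lemma coord_le_norm {n : ℕ} (x : EuclideanSpace ℝ (Fin n)) (j : Fin n) : |x j| ≤ ‖x‖ := by
  rw [EuclideanSpace.norm_eq]
  rw [show |x j| = Real.sqrt (‖x j‖ ^ 2) by rw [Real.norm_eq_abs, Real.sqrt_sq_eq_abs, abs_abs]]
  apply Real.sqrt_le_sqrt
  exact Finset.single_le_sum (f := fun i => ‖x i‖ ^ 2) (fun i _ => by positivity) (Finset.mem_univ j)

lemma isCompact_cube (d : ℕ) {M : ℝ} (hM : 0 ≤ M) : IsCompact (controlCube d M) := by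
  apply Metric.isCompact_of_isClosed_isBounded
  · have : controlCube d M = ⋂ k, (fun a : EuclideanSpace ℝ (Fin d) => a k) ⁻¹' (Set.Icc 0 M) := by
      ext a; simp [controlCube, Set.mem_iInter]
    rw [this]
    exact isClosed_iInter fun k => IsClosed.preimage (EuclideanSpace.proj (𝕜 := ℝ) k).continuous isClosed_Icc
  · rw [isBounded_iff_forall_norm_le]
    refine ⟨(d : ℝ) * M + 1, fun a ha => ?_⟩
    rw [EuclideanSpace.norm_eq]
    have h1 : ∑ i, ‖a i‖ ^ 2 ≤ ((d:ℝ) * M + 1) ^ 2 := by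
      calc ∑ i, ‖a i‖ ^ 2 ≤ ∑ _i : Fin d, M ^ 2 := by
            refine Finset.sum_le_sum fun i _ => ?_
            have h := ha i
            rw [Real.norm_eq_abs]
            have : |a i| ≤ M := abs_le.mpr ⟨by linarith [h.1], h.2⟩
            nlinarith [abs_nonneg (a i)]
        _ = (d : ℝ) * M ^ 2 := by simp [mul_comm]
        _ ≤ ((d:ℝ) * M + 1) ^ 2 := by
            have hdd : 0 ≤ (d:ℝ) * ((d:ℝ) - 1) := by
              rcases Nat.eq_zero_or_pos d with h | h
              · simp [h]
              · have h1 : (1:ℝ) ≤ (d:ℝ) := by exact_mod_cast h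
                nlinarith
            nlinarith [mul_nonneg hdd (sq_nonneg M), Nat.cast_nonneg (α := ℝ) d, hM]
    calc Real.sqrt (∑ i, ‖a i‖ ^ 2) ≤ Real.sqrt (((d:ℝ) * M + 1) ^ 2) := Real.sqrt_le_sqrt h1
      _ = (d:ℝ) * M + 1 := Real.sqrt_sq (by positivity)

lemma isCompact_hatSimplex (d : ℕ) : IsCompact (hatSimplexSet d) := by
  apply Metric.isCompact_of_isClosed_isBounded
  · have : hatSimplexSet d = (⋂ j, (fun η : EuclideanSpace ℝ (Fin (d-1)) => η j) ⁻¹' (Set.Ici 0)) ∩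
        ((fun η : EuclideanSpace ℝ (Fin (d-1)) => ∑ j, η j) ⁻¹' (Set.Iic 1)) := by
      ext η; simp [hatSimplexSet, Set.mem_iInter]
    rw [this]
    refine IsClosed.inter (isClosed_iInter fun j => IsClosed.preimage (EuclideanSpace.proj (𝕜 := ℝ) j).continuous isClosed_Ici) ?_
    exact IsClosed.preimage (by
      exact continuous_finset_sum _ fun j _ => (EuclideanSpace.proj (𝕜 := ℝ) j).continuous) isClosed_Iic
  · rw [isBounded_iff_forall_norm_le]
    refine ⟨(d : ℝ) + 1, fun η hη => ?_⟩
    obtain ⟨h0, h1⟩ := hη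
    rw [EuclideanSpace.norm_eq]
    have hcoord : ∀ j, |η j| ≤ 1 := by
      intro j
      rw [abs_le]
      constructor
      · linarith [h0 j]
      · calc η j ≤ ∑ i, η i := Finset.single_le_sum (fun i _ => h0 i) (Finset.mem_univ j)
          _ ≤ 1 := h1
    have h2 : ∑ j, ‖η j‖ ^ 2 ≤ ((d:ℝ) + 1) ^ 2 := by
      calc ∑ j, ‖η j‖ ^ 2 ≤ ∑ _j : Fin (d-1), (1:ℝ) := by
            refine Finset.sum_le_sum fun j _ => ?_
            rw [Real.norm_eq_abs]
            nlinarith [hcoord j, abs_nonneg (η j)]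
        _ = ((d - 1 : ℕ) : ℝ) := by simp
        _ ≤ ((d:ℝ)+1)^2 := by
            have h1 : ((d - 1 : ℕ) : ℝ) ≤ (d:ℝ) := by exact_mod_cast Nat.sub_le d 1
            nlinarith [Nat.cast_nonneg (α := ℝ) d]
    calc Real.sqrt (∑ j, ‖η j‖ ^ 2) ≤ Real.sqrt (((d:ℝ) + 1) ^ 2) := Real.sqrt_le_sqrt h2
      _ = (d:ℝ) + 1 := Real.sqrt_sq (by positivity)

/-- Existence of a maximizer for the Hamiltonian. -/
lemma ham_exists_max (d : ℕ) {M : ℝ} (hM : 0 ≤ M)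
    (f : ℝ → Fin d → EuclideanSpace ℝ (Fin d) → EuclideanSpace ℝ (Fin d) → ℝ)
    (i : Fin d) (t : ℝ) (m : EuclideanSpace ℝ (Fin d))
    (hf : ContDiff ℝ 1 (fun a => f t i a m)) (z : EuclideanSpace ℝ (Fin d)) :
    ∃ a ∈ controlCube d M,
      Ham d M f i t m z = -∑ k ∈ Finset.univ.erase i, a k * z k - f t i a m ∧
      ∀ b ∈ controlCube d M,
        -∑ k ∈ Finset.univ.erase i, b k * z k - f t i b m ≤ Ham d M f i t m z := by
  set ψ := fun a : EuclideanSpace ℝ (Fin d) =>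
    -∑ k ∈ Finset.univ.erase i, a k * z k - f t i a m with hψ
  have hcont : Continuous ψ := by
    apply Continuous.sub
    · exact (continuous_finset_sum _ fun k _ =>
        ((EuclideanSpace.proj (𝕜 := ℝ) k).continuous.mul continuous_const)).neg
    · exact hf.continuous
  obtain ⟨a, ha, hmax⟩ := (isCompact_cube d hM).exists_isMaxOn ⟨0, zero_mem_cube d hM⟩
    hcont.continuousOn
  have hbdd : BddAbove (ψ '' controlCube d M) := by
    refine ⟨ψ a, ?_⟩
    rintro _ ⟨b, hb, rfl⟩
    exact hmax hb
  have hHam : Ham d M f i t m z = sSup (ψ '' controlCube d M) := rfl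
  refine ⟨a, ha, ?_, ?_⟩
  · rw [hHam]
    apply le_antisymm
    · exact csSup_le (Set.Nonempty.image _ ⟨0, zero_mem_cube d hM⟩) (by rintro _ ⟨b, hb, rfl⟩; exact hmax hb)
    · exact le_csSup hbdd ⟨a, ha, rfl⟩
  · intro b hb
    rw [hHam]
    exact le_csSup hbdd ⟨b, hb, rfl⟩

/-- joint differentiability gives partial differentiability in time. -/
lemma diff_time {d : ℕ} {u : ℝ → EuclideanSpace ℝ (Fin (d-1)) → ℝ}
    {U : Set (ℝ × EuclideanSpace ℝ (Fin (d-1)))} (hUo : IsOpen U)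
    (hC : ContDiffOn ℝ 1 (fun p => u p.1 p.2) U) {t : ℝ}
    {η : EuclideanSpace ℝ (Fin (d-1))} (hmem : (t, η) ∈ U) :
    DifferentiableAt ℝ (fun s => u s η) t := by
  have hH : DifferentiableAt ℝ (fun p : ℝ × EuclideanSpace ℝ (Fin (d-1)) => u p.1 p.2) (t, η) :=
    (hC.differentiableOn one_ne_zero).differentiableAt (hUo.mem_nhds hmem)
  have : (fun s => u s η) = (fun p : ℝ × EuclideanSpace ℝ (Fin (d-1)) => u p.1 p.2) ∘
      (fun s => (s, η)) := rfl
  rw [this]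
  exact hH.comp t (differentiableAt_id.prodMk (differentiableAt_const η))

lemma diff_space {d : ℕ} {u : ℝ → EuclideanSpace ℝ (Fin (d-1)) → ℝ}
    {U : Set (ℝ × EuclideanSpace ℝ (Fin (d-1)))} (hUo : IsOpen U)
    (hC : ContDiffOn ℝ 1 (fun p => u p.1 p.2) U) {t : ℝ}
    {η : EuclideanSpace ℝ (Fin (d-1))} (hmem : (t, η) ∈ U) :
    DifferentiableAt ℝ (u t) η := by
  have hH : DifferentiableAt ℝ (fun p : ℝ × EuclideanSpace ℝ (Fin (d-1)) => u p.1 p.2) (t, η) :=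
    (hC.differentiableOn one_ne_zero).differentiableAt (hUo.mem_nhds hmem)
  have : (u t) = (fun p : ℝ × EuclideanSpace ℝ (Fin (d-1)) => u p.1 p.2) ∘ (fun y => (t, y)) := rfl
  rw [this]
  exact hH.comp η ((differentiableAt_const t).prodMk differentiableAt_id)

/-- directional derivative along a path. -/
lemma dirDeriv {n : ℕ} {g : EuclideanSpace ℝ (Fin n) → ℝ} {x : EuclideanSpace ℝ (Fin n)}
    (hg : DifferentiableAt ℝ g x) (v : EuclideanSpace ℝ (Fin n)) :
    HasDerivAt (fun μ : ℝ => g (x + μ • v)) (fderiv ℝ g x v) 0 := by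
  have hpath : HasDerivAt (fun μ : ℝ => x + μ • v) v 0 := by
    simpa using (((hasDerivAt_id (0:ℝ)).smul_const v).const_add x)
  have hx : x + (0:ℝ) • v = x := by simp
  have hfd : HasFDerivAt g (fderiv ℝ g x) (x + (0:ℝ) • v) := by
    rw [hx]; exact hg.hasFDerivAt
  exact hfd.comp_hasDerivAt 0 hpath

/-- the inner product of a gradient with a vector. -/
lemma grad_inner {n : ℕ} {g : EuclideanSpace ℝ (Fin n) → ℝ} {x : EuclideanSpace ℝ (Fin n)}
    (v : EuclideanSpace ℝ (Fin n)) :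
    ∑ j, gradient g x j * v j = fderiv ℝ g x v := by
  have h1 : ⟪gradient g x, v⟫ = fderiv ℝ g x v := by
    rw [show gradient g x = (InnerProductSpace.toDual ℝ _).symm (fderiv ℝ g x) from rfl]
    exact InnerProductSpace.toDual_symm_apply
  rw [← h1, PiLp.inner_apply]
  simp [RCLike.inner_apply]
  exact Finset.sum_congr rfl fun _ _ => mul_comm _ _

/-- the fundamental vector `V` built from an optimal control profile. -/
def Vvec (d : ℕ) (m : EuclideanSpace ℝ (Fin d)) (a : Fin d → EuclideanSpace ℝ (Fin d)) :
    Fin d → ℝ :=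
  fun k => (∑ i ∈ Finset.univ.erase k, m i * a i k) - m k * ∑ l ∈ Finset.univ.erase k, a k l

lemma erase_swap {d : ℕ} (g : Fin d → Fin d → ℝ) :
    ∑ i, ∑ k ∈ Finset.univ.erase i, g i k = ∑ k, ∑ i ∈ Finset.univ.erase k, g i k := by
  apply Finset.sum_comm'
  intro i k
  simp [ne_comm, eq_comm]

lemma key_identity (d : ℕ) (hd : 1 ≤ d) (m : EuclideanSpace ℝ (Fin d))
    (a : Fin d → EuclideanSpace ℝ (Fin d)) (r : EuclideanSpace ℝ (Fin (d-1))) :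
    ∑ i, m i * ∑ k ∈ Finset.univ.erase i, a i k * liftVecAll d i r k
      = ∑ j, Vvec d m a (fd d j) * r j := by
  have step1 : ∑ i, m i * ∑ k ∈ Finset.univ.erase i, a i k * liftVecAll d i r k
      = ∑ k, Vvec d m a k * tExt d r k := by
    have lhs : ∀ i, m i * ∑ k ∈ Finset.univ.erase i, a i k * liftVecAll d i r k
        = (∑ k ∈ Finset.univ.erase i, m i * a i k * tExt d r k)
          - (m i * ∑ k ∈ Finset.univ.erase i, a i k) * tExt d r i := by
      intro i
      have h1 : ∀ k ∈ Finset.univ.erase i, m i * (a i k * liftVecAll d i r k)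
          = m i * a i k * tExt d r k - m i * a i k * tExt d r i := fun k _ => by
        rw [lift_apply]; ring
      calc m i * ∑ k ∈ Finset.univ.erase i, a i k * liftVecAll d i r k
          = ∑ k ∈ Finset.univ.erase i, (m i * a i k * tExt d r k - m i * a i k * tExt d r i) := by
            rw [Finset.mul_sum]; exact Finset.sum_congr rfl h1
        _ = (∑ k ∈ Finset.univ.erase i, m i * a i k * tExt d r k)
            - (∑ k ∈ Finset.univ.erase i, m i * a i k) * tExt d r i := by
            rw [Finset.sum_sub_distrib, Finset.sum_mul]
        _ = _ := by rw [Finset.mul_sum]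
    rw [Finset.sum_congr rfl fun i _ => lhs i, Finset.sum_sub_distrib]
    have swap : ∑ i, ∑ k ∈ Finset.univ.erase i, m i * a i k * tExt d r k
        = ∑ k, (∑ i ∈ Finset.univ.erase k, m i * a i k) * tExt d r k := by
      rw [erase_swap (fun i k => m i * a i k * tExt d r k)]
      exact Finset.sum_congr rfl fun k _ => (Finset.sum_mul _ _ _).symm
    rw [swap, ← Finset.sum_sub_distrib]
    apply Finset.sum_congr rfl
    intro k _
    rw [Vvec]
    ring
  rw [step1, sum_fin_split d hd (fun k => Vvec d m a k * tExt d r k), tExt_last d hd]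
  rw [mul_zero, add_zero]
  exact Finset.sum_congr rfl fun j _ => by rw [tExt_fd]

lemma Vvec_sum_zero (d : ℕ) (m : EuclideanSpace ℝ (Fin d))
    (a : Fin d → EuclideanSpace ℝ (Fin d)) : ∑ k, Vvec d m a k = 0 := by
  unfold Vvec
  rw [Finset.sum_sub_distrib]
  rw [← erase_swap (fun i k => m i * a i k)]
  rw [sub_eq_zero]
  exact Finset.sum_congr rfl fun i _ => (Finset.mul_sum _ _ _).symm

lemma deriv_nonpos_of_eventually_le {g : ℝ → ℝ} {x : ℝ} {G : ℝ}
    (hg : HasDerivAt g G x) (h : ∀ᶠ z in 𝓝[>] x, g z ≤ g x) : G ≤ 0 := by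
  have ht : Filter.Tendsto (slope g x) (𝓝[>] x) (𝓝 G) :=
    (hasDerivAt_iff_tendsto_slope.mp hg).mono_left
      (nhdsWithin_mono x fun z hz => Set.mem_compl_singleton_iff.mpr (ne_of_gt (Set.mem_Ioi.mp hz)))
  refine le_of_tendsto ht ?_
  filter_upwards [h, self_mem_nhdsWithin] with z hz hz'
  simp only [Set.mem_Ioi] at hz'
  rw [slope_def_field]
  exact div_nonpos_of_nonpos_of_nonneg (by linarith) (by linarith)

lemma eventually_mem (d : ℕ) {η v : EuclideanSpace ℝ (Fin (d-1))} (hη : η ∈ hatSimplexSet d)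
    (hv0 : ∀ j, η j = 0 → 0 ≤ v j) (hvs : (∑ j, η j) = 1 → (∑ j, v j) ≤ 0) :
    ∀ᶠ μ in 𝓝[>] (0:ℝ), η + μ • v ∈ hatSimplexSet d := by
  have hcoord : ∀ j : Fin (d-1), ∀ᶠ μ in 𝓝[>] (0:ℝ), 0 ≤ η j + μ * v j := by
    intro j
    rcases eq_or_lt_of_le (hη.1 j) with h | h
    · filter_upwards [self_mem_nhdsWithin] with μ hμ
      simp only [Set.mem_Ioi] at hμ
      have := hv0 j h.symm
      nlinarith
    · have hc : Filter.Tendsto (fun μ : ℝ => η j + μ * v j) (𝓝[>] 0) (𝓝 (η j + 0 * v j)) := by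
        apply Filter.Tendsto.mono_left ?_ nhdsWithin_le_nhds
        exact (continuous_const.add (continuous_id.mul continuous_const)).tendsto 0
      rw [zero_mul, add_zero] at hc
      exact (hc.eventually (eventually_gt_nhds h)).mono fun μ h' => le_of_lt h'
  have hsum : ∀ᶠ μ in 𝓝[>] (0:ℝ), (∑ j, η j) + μ * ∑ j, v j ≤ 1 := by
    rcases eq_or_lt_of_le hη.2 with h | h
    · have hv := hvs h
      filter_upwards [self_mem_nhdsWithin] with μ hμ
      simp only [Set.mem_Ioi] at hμ
      nlinarith
    · have hc : Filter.Tendsto (fun μ : ℝ => (∑ j, η j) + μ * ∑ j, v j) (𝓝[>] 0)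
          (𝓝 ((∑ j, η j) + 0 * ∑ j, v j)) := by
        apply Filter.Tendsto.mono_left ?_ nhdsWithin_le_nhds
        exact (continuous_const.add (continuous_id.mul continuous_const)).tendsto 0
      rw [zero_mul, add_zero] at hc
      exact (hc.eventually (eventually_lt_nhds h)).mono fun μ h' => le_of_lt h'
  filter_upwards [Filter.eventually_all.mpr hcoord, hsum] with μ h1 h2
  constructor
  · intro j
    have := h1 j
    simpa [PiLp.add_apply, PiLp.smul_apply, smul_eq_mul] using this
  · have hsum2 : ∑ j, (η + μ • v) j = (∑ j, η j) + μ * ∑ j, v j := by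
      rw [Finset.mul_sum, ← Finset.sum_add_distrib]
      exact Finset.sum_congr rfl fun j _ => by
        simp [PiLp.add_apply, PiLp.smul_apply, smul_eq_mul]
    rw [hsum2]
    exact h2

/-- The classical comparison/stability estimate for the transformed HJB operator. -/
lemma comparison (d : ℕ) (hd : 2 ≤ d) (T : ℝ) (hT : 0 < T) (M : ℝ) (hM : 0 < M)
    (f : ℝ → Fin d → EuclideanSpace ℝ (Fin d) → EuclideanSpace ℝ (Fin d) → ℝ)
    (hfB1 : ∀ i : Fin d, ∀ t ∈ Set.Icc (0:ℝ) T, ∀ m ∈ simplexSet d,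
      ContDiff ℝ 1 (fun a => f t i a m))
    (u₁ u₂ : ℝ → EuclideanSpace ℝ (Fin (d-1)) → ℝ)
    (h₁ : hatC1OnNbhd d T u₁) (h₂ : hatC1OnNbhd d T u₂)
    (ε₁ ε₂ δ : ℝ)
    (hL₁ : ∀ t ∈ Set.Icc (0:ℝ) T, ∀ η ∈ hatSimplexSet d, |hatHJBop d M f u₁ t η| ≤ ε₁)
    (hL₂ : ∀ t ∈ Set.Icc (0:ℝ) T, ∀ η ∈ hatSimplexSet d, |hatHJBop d M f u₂ t η| ≤ ε₂)
    (hterm : ∀ η ∈ hatSimplexSet d, u₁ T η - u₂ T η ≤ δ) :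
    ∀ t ∈ Set.Icc (0:ℝ) T, ∀ η ∈ hatSimplexSet d,
      u₁ t η - u₂ t η ≤ δ + (ε₁ + ε₂) * (T - t) := by
  obtain ⟨U₁, hU₁o, hU₁s, hC₁⟩ := h₁
  obtain ⟨U₂, hU₂o, hU₂s, hC₂⟩ := h₂
  have hd1 : 1 ≤ d := by omega
  set K : Set (ℝ × EuclideanSpace ℝ (Fin (d-1))) := Set.Icc (0:ℝ) T ×ˢ hatSimplexSet d with hK
  have hKc : IsCompact K := isCompact_Icc.prod (isCompact_hatSimplex d)
  have hKne : K.Nonempty :=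
    ⟨(T, 0), Set.mem_prod.mpr ⟨⟨le_of_lt hT, le_rfl⟩, zero_mem_hatSimplex d⟩⟩
  have key : ∀ ρ > (0:ℝ), ∀ t ∈ Set.Icc (0:ℝ) T, ∀ η ∈ hatSimplexSet d,
      u₁ t η - u₂ t η ≤ δ + (ε₁ + ε₂ + ρ) * (T - t) := by
    intro ρ hρ
    set c : ℝ := ε₁ + ε₂ + ρ with hc
    set Φ : ℝ × EuclideanSpace ℝ (Fin (d-1)) → ℝ :=
      fun p => u₁ p.1 p.2 - u₂ p.1 p.2 + c * p.1 with hΦ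
    have hΦc : ContinuousOn Φ K := by
      apply ContinuousOn.add
      · exact (hC₁.continuousOn.mono hU₁s).sub (hC₂.continuousOn.mono hU₂s)
      · exact (continuous_const.mul continuous_fst).continuousOn
    obtain ⟨⟨tS, ηS⟩, hq0K, hqmax⟩ := hKc.exists_isMaxOn hKne hΦc
    have htS : tS ∈ Set.Icc (0:ℝ) T := (Set.mem_prod.mp hq0K).1
    have hηS : ηS ∈ hatSimplexSet d := (Set.mem_prod.mp hq0K).2
    have htT : tS = T := by
      by_contra hne
      have htlt : tS < T := lt_of_le_of_ne htS.2 hne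
      have hm₁ : (tS, ηS) ∈ U₁ := hU₁s hq0K
      have hm₂ : (tS, ηS) ∈ U₂ := hU₂s hq0K
      have hts₁ := diff_time hU₁o hC₁ hm₁
      have hts₂ := diff_time hU₂o hC₂ hm₂
      have hxs₁ := diff_space hU₁o hC₁ hm₁
      have hxs₂ := diff_space hU₂o hC₂ hm₂
      set D₁ := deriv (fun s => u₁ s ηS) tS with hD₁
      set D₂ := deriv (fun s => u₂ s ηS) tS with hD₂
      set p := gradient (u₁ tS) ηS with hpdef
      set q := gradient (u₂ tS) ηS with hqdef
      set m := embedSimplex d ηS with hmdef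
      have hmS : m ∈ simplexSet d := embed_mem_simplex d hd1 hηS
      -- time derivative inequality at the maximum
      have hψ : HasDerivAt (fun s => u₁ s ηS - u₂ s ηS + c * s) (D₁ - D₂ + c) tS := by
        have h3 : HasDerivAt (fun s : ℝ => c * s) c tS := by
          simpa using (hasDerivAt_id tS).const_mul c
        exact (hts₁.hasDerivAt.sub hts₂.hasDerivAt).add h3
      have htime : D₁ - D₂ + c ≤ 0 := by
        apply deriv_nonpos_of_eventually_le hψ
        filter_upwards [Ioc_mem_nhdsGT_of_mem ⟨le_refl tS, htlt⟩] with s hs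
        have hsK : (s, ηS) ∈ K := Set.mem_prod.mpr ⟨⟨le_trans htS.1 hs.1.le, hs.2⟩, hηS⟩
        exact hqmax hsK
      -- maximizers for the u₂-Hamiltonian
      have hch : ∀ i : Fin d, ∃ a ∈ controlCube d M,
          Ham d M f i tS m (liftVecAll d i q) =
            -∑ k ∈ Finset.univ.erase i, a k * liftVecAll d i q k - f tS i a m ∧
          ∀ b ∈ controlCube d M,
            -∑ k ∈ Finset.univ.erase i, b k * liftVecAll d i q k - f tS i b m ≤
              Ham d M f i tS m (liftVecAll d i q) :=
        fun i => ham_exists_max d (le_of_lt hM) f i tS m (hfB1 i tS htS m hmS) _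
      choose A hAcube hAval hAub using hch
      have hub : ∀ i : Fin d,
          -∑ k ∈ Finset.univ.erase i, A i k * liftVecAll d i p k - f tS i (A i) m ≤
            Ham d M f i tS m (liftVecAll d i p) := by
        intro i
        obtain ⟨a, ha, hv', hub'⟩ :=
          ham_exists_max d (le_of_lt hM) f i tS m (hfB1 i tS htS m hmS) (liftVecAll d i p)
        exact hub' (A i) (hAcube i)
      set v : EuclideanSpace ℝ (Fin (d-1)) :=
        (EuclideanSpace.equiv (Fin (d-1)) ℝ).symm (fun j => Vvec d m A (fd d j)) with hvdef
      have hvj : ∀ j, v j = Vvec d m A (fd d j) := fun j => rfl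
      have hv0 : ∀ j, ηS j = 0 → 0 ≤ v j := by
        intro j hj
        rw [hvj]
        have hmj : m (fd d j) = ηS j := embed_fd d ηS j
        unfold Vvec
        rw [hmj, hj, zero_mul, sub_zero]
        exact Finset.sum_nonneg fun i _ => mul_nonneg (hmS.1 i) (hAcube i (fd d j)).1
      have hvs : (∑ j, ηS j) = 1 → (∑ j, v j) ≤ 0 := by
        intro hsum
        have hml : m ⟨d - 1, by omega⟩ = 0 := by
          rw [hmdef, embed_last d hd1, hsum]; ring
        have htot : ∑ k, Vvec d m A k = 0 := Vvec_sum_zero d m A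
        have hsplit := sum_fin_split d hd1 (Vvec d m A)
        have hlastge : 0 ≤ Vvec d m A ⟨d - 1, by omega⟩ := by
          unfold Vvec
          rw [hml, zero_mul, sub_zero]
          exact Finset.sum_nonneg fun i _ => mul_nonneg (hmS.1 i) (hAcube i _).1
        have hvv : ∑ j, v j = ∑ j, Vvec d m A (fd d j) :=
          Finset.sum_congr rfl fun j _ => hvj j
        rw [hvv]
        linarith [hsplit, htot, hlastge]
      -- spatial first-order condition
      have hpath : HasDerivAt (fun μ : ℝ => u₁ tS (ηS + μ • v) - u₂ tS (ηS + μ • v))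
          (fderiv ℝ (u₁ tS) ηS v - fderiv ℝ (u₂ tS) ηS v) 0 :=
        (dirDeriv hxs₁ v).sub (dirDeriv hxs₂ v)
      have hGle : fderiv ℝ (u₁ tS) ηS v - fderiv ℝ (u₂ tS) ηS v ≤ 0 := by
        apply deriv_nonpos_of_eventually_le hpath
        filter_upwards [eventually_mem d hηS hv0 hvs] with μ hμ
        have hK' : (tS, ηS + μ • v) ∈ K := Set.mem_prod.mpr ⟨htS, hμ⟩
        have h1 : u₁ tS (ηS + μ • v) - u₂ tS (ηS + μ • v) + c * tS ≤
            u₁ tS ηS - u₂ tS ηS + c * tS := hqmax hK'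
        have h0 : ηS + (0:ℝ) • v = ηS := by simp
        rw [h0]
        linarith
      -- inner product identities
      have hip1 : ∑ j, Vvec d m A (fd d j) * p j = fderiv ℝ (u₁ tS) ηS v := by
        rw [← grad_inner (g := u₁ tS) (x := ηS) v]
        exact Finset.sum_congr rfl fun j _ => by rw [hvj]; ring
      have hip2 : ∑ j, Vvec d m A (fd d j) * q j = fderiv ℝ (u₂ tS) ηS v := by
        rw [← grad_inner (g := u₂ tS) (x := ηS) v]
        exact Finset.sum_congr rfl fun j _ => by rw [hvj]; ring
      -- Hamiltonian difference bound
      have hper : ∀ i ∈ Finset.univ, 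
          m i * (-(∑ k ∈ Finset.univ.erase i, A i k * liftVecAll d i p k)
            + ∑ k ∈ Finset.univ.erase i, A i k * liftVecAll d i q k)
          ≤ m i * hatHam d M f i tS ηS p - m i * hatHam d M f i tS ηS q := by
        intro i _
        have e1 : hatHam d M f i tS ηS p = Ham d M f i tS m (liftVecAll d i p) := rfl
        have e2 : hatHam d M f i tS ηS q = Ham d M f i tS m (liftVecAll d i q) := rfl
        rw [e1, e2, ← mul_sub]
        refine mul_le_mul_of_nonneg_left ?_ (hmS.1 i)
        have h1 := hub i
        have h2 := hAval i
        linarith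
      have hΔ : -(fderiv ℝ (u₁ tS) ηS v - fderiv ℝ (u₂ tS) ηS v) ≤
          (∑ i, m i * hatHam d M f i tS ηS p) - ∑ i, m i * hatHam d M f i tS ηS q := by
        have hL : ∑ i, m i * (-(∑ k ∈ Finset.univ.erase i, A i k * liftVecAll d i p k)
              + ∑ k ∈ Finset.univ.erase i, A i k * liftVecAll d i q k)
            = -(∑ i, m i * ∑ k ∈ Finset.univ.erase i, A i k * liftVecAll d i p k)
              + ∑ i, m i * ∑ k ∈ Finset.univ.erase i, A i k * liftVecAll d i q k := by
          rw [← Finset.sum_neg_distrib, ← Finset.sum_add_distrib]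
          exact Finset.sum_congr rfl fun i _ => by ring
        calc -(fderiv ℝ (u₁ tS) ηS v - fderiv ℝ (u₂ tS) ηS v)
            = -(∑ j, Vvec d m A (fd d j) * p j) + ∑ j, Vvec d m A (fd d j) * q j := by
              rw [hip1, hip2]; ring
          _ = ∑ i, m i * (-(∑ k ∈ Finset.univ.erase i, A i k * liftVecAll d i p k)
              + ∑ k ∈ Finset.univ.erase i, A i k * liftVecAll d i q k) := by
              rw [hL, key_identity d hd1 m A p, key_identity d hd1 m A q]
          _ ≤ ∑ i, (m i * hatHam d M f i tS ηS p - m i * hatHam d M f i tS ηS q) :=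
              Finset.sum_le_sum hper
          _ = _ := Finset.sum_sub_distrib _ _
      -- PDE relations and contradiction
      have ePDE₁ : hatHJBop d M f u₁ tS ηS =
          -D₁ + ∑ i, m i * hatHam d M f i tS ηS p := rfl
      have ePDE₂ : hatHJBop d M f u₂ tS ηS =
          -D₂ + ∑ i, m i * hatHam d M f i tS ηS q := rfl
      have h1 := abs_le.mp (hL₁ tS htS ηS hηS)
      have h2 := abs_le.mp (hL₂ tS htS ηS hηS)
      rw [ePDE₁] at h1
      rw [ePDE₂] at h2
      have hfinal : (0:ℝ) < 0 := by
        have := h1.2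
        have := h2.1
        have := hΔ
        have := hGle
        have := htime
        nlinarith [hρ]
      exact lt_irrefl 0 hfinal
    intro t ht η hη
    have hmem : (t, η) ∈ K := Set.mem_prod.mpr ⟨ht, hη⟩
    have h1 : u₁ t η - u₂ t η + c * t ≤ u₁ tS ηS - u₂ tS ηS + c * tS := hqmax hmem
    have h2 : u₁ T η - u₂ T η ≤ δ := hterm η hη -- unused
    have h3 : u₁ T ηS - u₂ T ηS ≤ δ := hterm ηS hηS
    rw [htT] at h1
    have hring : c * (T - t) = c * T - c * t := by ring
    linarith
  intro t ht η hη
  refine le_of_forall_pos_le_add fun ρ' hρ' => ?_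
  have hTpos : (0:ℝ) < T + 1 := by linarith
  have hρ : (0:ℝ) < ρ' / (T + 1) := by positivity
  have hkey := key (ρ' / (T + 1)) hρ t ht η hη
  have hTt : 0 ≤ T - t := by linarith [ht.2]
  have hTt' : T - t ≤ T + 1 := by linarith [ht.1]
  have : (ρ' / (T + 1)) * (T - t) ≤ ρ' := by
    rw [div_mul_eq_mul_div, div_le_iff₀ hTpos]
    nlinarith
  nlinarith

lemma isCompact_simplex (d : ℕ) : IsCompact (simplexSet d) := by
  apply Metric.isCompact_of_isClosed_isBounded
  · have : simplexSet d = (⋂ j, (fun m : EuclideanSpace ℝ (Fin d) => m j) ⁻¹' (Set.Ici 0)) ∩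
        ((fun m : EuclideanSpace ℝ (Fin d) => ∑ j, m j) ⁻¹' {1}) := by
      ext m; simp [simplexSet, Set.mem_iInter]
    rw [this]
    refine IsClosed.inter (isClosed_iInter fun j =>
      IsClosed.preimage (EuclideanSpace.proj (𝕜 := ℝ) j).continuous isClosed_Ici) ?_
    exact IsClosed.preimage
      (continuous_finset_sum _ fun j _ => (EuclideanSpace.proj (𝕜 := ℝ) j).continuous)
      isClosed_singleton
  · rw [isBounded_iff_forall_norm_le]
    refine ⟨(d : ℝ) + 1, fun m hm => ?_⟩
    obtain ⟨h0, h1⟩ := hm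
    rw [EuclideanSpace.norm_eq]
    have hcoord : ∀ j, |m j| ≤ 1 := by
      intro j
      rw [abs_le]
      refine ⟨by linarith [h0 j], ?_⟩
      calc m j ≤ ∑ i, m i := Finset.single_le_sum (fun i _ => h0 i) (Finset.mem_univ j)
        _ = 1 := h1
    have h2 : ∑ j, ‖m j‖ ^ 2 ≤ ((d:ℝ) + 1) ^ 2 := by
      calc ∑ j, ‖m j‖ ^ 2 ≤ ∑ _j : Fin d, (1:ℝ) := by
            refine Finset.sum_le_sum fun j _ => ?_
            rw [Real.norm_eq_abs]
            nlinarith [hcoord j, abs_nonneg (m j)]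
        _ = (d : ℝ) := by simp
        _ ≤ ((d:ℝ)+1)^2 := by nlinarith [Nat.cast_nonneg (α := ℝ) d]
    calc Real.sqrt (∑ j, ‖m j‖ ^ 2) ≤ Real.sqrt (((d:ℝ) + 1) ^ 2) := Real.sqrt_le_sqrt h2
      _ = (d:ℝ) + 1 := Real.sqrt_sq (by positivity)

lemma continuous_embed (d : ℕ) : Continuous (embedSimplex d) := by
  have : embedSimplex d = fun η => (EuclideanSpace.equiv (Fin d) ℝ).symm
      (fun j => if hj : (j : ℕ) < d - 1 then η ⟨j, hj⟩ else 1 - ∑ k, η k) := rfl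
  rw [this]
  refine (EuclideanSpace.equiv (Fin d) ℝ).symm.continuous.comp ?_
  refine continuous_pi fun j => ?_
  by_cases hj : (j : ℕ) < d - 1
  · simp only [dif_pos hj]
    exact (EuclideanSpace.proj (𝕜 := ℝ) (⟨j, hj⟩ : Fin (d-1))).continuous
  · simp only [dif_neg hj]
    exact continuous_const.sub
      (continuous_finset_sum _ fun k _ => (EuclideanSpace.proj (𝕜 := ℝ) k).continuous)

lemma continuousOn_hatG (d : ℕ) (hd : 1 ≤ d) (g : Fin d → EuclideanSpace ℝ (Fin d) → ℝ)
    (hg : ∀ i, ContinuousOn (g i) (simplexSet d)) :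
    ContinuousOn (hatG d g) (hatSimplexSet d) := by
  have : hatG d g = fun η => ∑ i, embedSimplex d η i * g i (embedSimplex d η) := rfl
  rw [this]
  apply continuousOn_finset_sum
  intro i _
  apply ContinuousOn.mul
  · exact (((EuclideanSpace.proj (𝕜 := ℝ) i).continuous.comp (continuous_embed d))).continuousOn
  · exact (hg i).comp (continuous_embed d).continuousOn
      (fun η hη => embed_mem_simplex d hd hη)

/-- boundedness of the HJB operator of a `C¹` function over `[0,T] × Ŝ`. -/
lemma opBound (d : ℕ) (hd : 2 ≤ d) (T : ℝ) (hT : 0 < T) (M : ℝ) (hM : 0 < M)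
    (f : ℝ → Fin d → EuclideanSpace ℝ (Fin d) → EuclideanSpace ℝ (Fin d) → ℝ)
    (hFc : Continuous (fun q : ℝ × (Fin d → EuclideanSpace ℝ (Fin d)) × EuclideanSpace ℝ (Fin d) =>
      ∑ i, q.2.2 i * f q.1 i (q.2.1 i) q.2.2))
    (hfB1 : ∀ i : Fin d, ∀ t ∈ Set.Icc (0:ℝ) T, ∀ m ∈ simplexSet d,
      ContDiff ℝ 1 (fun a => f t i a m))
    (u : ℝ → EuclideanSpace ℝ (Fin (d-1)) → ℝ) (hu : hatC1OnNbhd d T u) :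
    ∃ C : ℝ, ∀ t ∈ Set.Icc (0:ℝ) T, ∀ η ∈ hatSimplexSet d, |hatHJBop d M f u t η| ≤ C := by
  obtain ⟨U, hUo, hUs, hC⟩ := hu
  have hd1 : 1 ≤ d := by omega
  -- bound on F over the compact product
  obtain ⟨BF, hBF⟩ := ((isCompact_Icc (a := (0:ℝ)) (b := T)).prod
    ((isCompact_univ_pi fun _ : Fin d => isCompact_cube d hM.le).prod
      (isCompact_simplex d))).exists_bound_of_continuousOn hFc.continuousOn
  -- bound on the joint derivative over K
  have hKc : IsCompact (Set.Icc (0:ℝ) T ×ˢ hatSimplexSet d) :=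
    isCompact_Icc.prod (isCompact_hatSimplex d)
  have hfdc : ContinuousOn (fderiv ℝ (fun p : ℝ × EuclideanSpace ℝ (Fin (d-1)) => u p.1 p.2)) U :=
    hC.continuousOn_fderiv_of_isOpen hUo le_rfl
  obtain ⟨CD, hCD⟩ := hKc.exists_bound_of_continuousOn (hfdc.mono hUs)
  refine ⟨CD + (2*d*M*CD + BF), ?_⟩
  intro t ht η hη
  have hmemK : (t, η) ∈ Set.Icc (0:ℝ) T ×ˢ hatSimplexSet d := Set.mem_prod.mpr ⟨ht, hη⟩
  have hmemU : (t, η) ∈ U := hUs hmemK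
  have hH : DifferentiableAt ℝ (fun p : ℝ × EuclideanSpace ℝ (Fin (d-1)) => u p.1 p.2) (t, η) :=
    (hC.differentiableOn one_ne_zero).differentiableAt (hUo.mem_nhds hmemU)
  set D := fderiv ℝ (fun p : ℝ × EuclideanSpace ℝ (Fin (d-1)) => u p.1 p.2) (t, η) with hDdef
  have hDle : ‖D‖ ≤ CD := hCD (t, η) hmemK
  have hCD0 : 0 ≤ CD := le_trans (norm_nonneg D) hDle
  -- time derivative bound
  have hder : HasDerivAt (fun s => u s η) (D ((1:ℝ), (0 : EuclideanSpace ℝ (Fin (d-1))))) t :=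
    by have := hH.hasFDerivAt.comp_hasDerivAt t ((hasDerivAt_id' t).prodMk (hasDerivAt_const t η)); exact this
  have h1 : |deriv (fun s => u s η) t| ≤ CD := by
    rw [hder.deriv]
    calc |D ((1:ℝ), (0 : EuclideanSpace ℝ (Fin (d-1))))|
        = ‖D ((1:ℝ), (0 : EuclideanSpace ℝ (Fin (d-1))))‖ := (Real.norm_eq_abs _).symm
      _ ≤ ‖D‖ * ‖((1:ℝ), (0 : EuclideanSpace ℝ (Fin (d-1))))‖ := D.le_opNorm _
      _ ≤ CD * 1 := by
          have hn : ‖((1:ℝ), (0 : EuclideanSpace ℝ (Fin (d-1))))‖ = 1 := by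
            simp [Prod.norm_def]
          rw [hn]
          exact mul_le_mul_of_nonneg_right hDle zero_le_one
      _ = CD := mul_one CD
  -- gradient norm bound
  set j : EuclideanSpace ℝ (Fin (d-1)) →L[ℝ] ℝ × EuclideanSpace ℝ (Fin (d-1)) :=
    (0 : EuclideanSpace ℝ (Fin (d-1)) →L[ℝ] ℝ).prod (ContinuousLinearMap.id ℝ _) with hjdef
  have hjnorm : ‖j‖ ≤ 1 := by
    apply ContinuousLinearMap.opNorm_le_bound _ zero_le_one
    intro y
    have : j y = ((0:ℝ), y) := rfl
    rw [this, one_mul]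
    simp [Prod.norm_def]
  have hsp : HasFDerivAt (fun y => (t, y)) j η := (hasFDerivAt_const t η).prodMk (hasFDerivAt_id η)
  have hcomp : HasFDerivAt (u t) (D.comp j) η := hH.hasFDerivAt.comp η hsp
  have hgradnorm : ‖gradient (u t) η‖ ≤ CD := by
    have heq : gradient (u t) η =
        (InnerProductSpace.toDual ℝ (EuclideanSpace ℝ (Fin (d-1)))).symm (fderiv ℝ (u t) η) := rfl
    rw [heq, LinearIsometryEquiv.norm_map, hcomp.fderiv]
    calc ‖D.comp j‖ ≤ ‖D‖ * ‖j‖ := ContinuousLinearMap.opNorm_comp_le _ _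
      _ ≤ CD * 1 := mul_le_mul hDle hjnorm (norm_nonneg _) hCD0
      _ = CD := mul_one CD
  -- Hamiltonian bound
  set p := gradient (u t) η with hpdef
  set m := embedSimplex d η with hmdef
  have hmS : m ∈ simplexSet d := embed_mem_simplex d hd1 hη
  have hch : ∀ i : Fin d, ∃ a ∈ controlCube d M,
      Ham d M f i t m (liftVecAll d i p) =
        -∑ k ∈ Finset.univ.erase i, a k * liftVecAll d i p k - f t i a m ∧
      ∀ b ∈ controlCube d M,
        -∑ k ∈ Finset.univ.erase i, b k * liftVecAll d i p k - f t i b m ≤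
          Ham d M f i t m (liftVecAll d i p) :=
    fun i => ham_exists_max d hM.le f i t m (hfB1 i t ht m hmS) _
  choose A hAcube hAval hAub using hch
  have hlift : ∀ (i k : Fin d), |liftVecAll d i p k| ≤ 2 * ‖p‖ := by
    intro i k
    rw [lift_apply]
    have htb : ∀ k' : Fin d, |tExt d p k'| ≤ ‖p‖ := by
      intro k'
      unfold tExt
      split_ifs with h
      · exact coord_le_norm p _
      · simp [norm_nonneg]
    calc |tExt d p k - tExt d p i| ≤ |tExt d p k| + |tExt d p i| := abs_sub _ _
      _ ≤ ‖p‖ + ‖p‖ := add_le_add (htb k) (htb i)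
      _ = 2 * ‖p‖ := by ring
  have hsumb : ∀ i : Fin d,
      |∑ k ∈ Finset.univ.erase i, A i k * liftVecAll d i p k| ≤ 2*d*M*‖p‖ := by
    intro i
    calc |∑ k ∈ Finset.univ.erase i, A i k * liftVecAll d i p k|
        ≤ ∑ k ∈ Finset.univ.erase i, |A i k * liftVecAll d i p k| :=
          Finset.abs_sum_le_sum_abs _ _
      _ ≤ ∑ _k ∈ Finset.univ.erase i, M * (2 * ‖p‖) := by
          refine Finset.sum_le_sum fun k _ => ?_
          rw [abs_mul]
          refine mul_le_mul ?_ (hlift i k) (abs_nonneg _) hM.le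
          exact abs_le.mpr ⟨by linarith [(hAcube i k).1], (hAcube i k).2⟩
      _ ≤ (d : ℝ) * (M * (2 * ‖p‖)) := by
          rw [Finset.sum_const, nsmul_eq_mul]
          refine mul_le_mul_of_nonneg_right ?_ (by positivity)
          calc ((Finset.univ.erase i).card : ℝ) ≤ (Finset.univ (α := Fin d)).card := by
                exact_mod_cast Finset.card_le_card (Finset.erase_subset _ _)
            _ = d := by simp
      _ = 2*d*M*‖p‖ := by ring
  have hFmem : ∀ a : Fin d → EuclideanSpace ℝ (Fin d), (∀ i, a i ∈ controlCube d M) →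
      |∑ i, m i * f t i (a i) m| ≤ BF := by
    intro a ha
    have hmem : (t, a, m) ∈ Set.Icc (0:ℝ) T ×ˢ
        ((Set.univ.pi fun _ : Fin d => controlCube d M) ×ˢ simplexSet d) :=
      Set.mem_prod.mpr ⟨ht, Set.mem_prod.mpr ⟨Set.mem_univ_pi.mpr fun i => ha i, hmS⟩⟩
    simpa [Real.norm_eq_abs] using hBF (t, a, m) hmem
  have hSup : (∑ i, m i * hatHam d M f i t η p) ≤ 2*d*M*CD + BF := by
    have step1 : ∑ i, m i * hatHam d M f i t η p
        = ∑ i, (m i * (-∑ k ∈ Finset.univ.erase i, A i k * liftVecAll d i p k)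
            - m i * f t i (A i) m) := by
      refine Finset.sum_congr rfl fun i _ => ?_
      have e1 : hatHam d M f i t η p = Ham d M f i t m (liftVecAll d i p) := rfl
      rw [e1, hAval i]
      ring
    rw [step1, Finset.sum_sub_distrib]
    have step2 : ∑ i, m i * (-∑ k ∈ Finset.univ.erase i, A i k * liftVecAll d i p k)
        ≤ ∑ i, m i * (2*d*M*‖p‖) := by
      refine Finset.sum_le_sum fun i _ => mul_le_mul_of_nonneg_left ?_ (hmS.1 i)
      have := hsumb i
      have h2 := neg_abs_le (∑ k ∈ Finset.univ.erase i, A i k * liftVecAll d i p k)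
      linarith
    have step3 : ∑ i, m i * (2*d*M*‖p‖) = 2*d*M*‖p‖ := by
      rw [← Finset.sum_mul, hmS.2, one_mul]
    have step4 : -(∑ i, m i * f t i (A i) m) ≤ BF := by
      have := hFmem (fun i => A i) hAcube
      have h2 := (abs_le.mp this).1
      linarith
    have step5 : 2*d*M*‖p‖ ≤ 2*d*M*CD := by
      refine mul_le_mul_of_nonneg_left hgradnorm ?_
      positivity
    linarith [step2, step3.le, step3.ge]
  have hSlo : -BF ≤ ∑ i, m i * hatHam d M f i t η p := by
    have heach : ∀ i ∈ Finset.univ, m i * (-f t i 0 m) ≤ m i * hatHam d M f i t η p := by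
      intro i _
      refine mul_le_mul_of_nonneg_left ?_ (hmS.1 i)
      have hzero := hAub i 0 (zero_mem_cube d hM.le)
      have h0 : -∑ k ∈ Finset.univ.erase i, (0 : EuclideanSpace ℝ (Fin d)) k
          * liftVecAll d i p k - f t i 0 m = -f t i 0 m := by
        simp
      rw [h0] at hzero
      exact hzero
    have hsle := Finset.sum_le_sum heach
    have hF0 : |∑ i, m i * f t i 0 m| ≤ BF :=
      hFmem (fun _ => 0) (fun _ => zero_mem_cube d hM.le)
    have hneg : ∑ i, m i * (-f t i 0 m) = -(∑ i, m i * f t i 0 m) := by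
      rw [← Finset.sum_neg_distrib]
      exact Finset.sum_congr rfl fun i _ => by ring
    rw [hneg] at hsle
    have := (abs_le.mp hF0).2
    linarith
  -- combine
  have habs : |∑ i, m i * hatHam d M f i t η p| ≤ 2*d*M*CD + BF := by
    rw [abs_le]
    constructor
    · have h2 : (0:ℝ) ≤ 2*d*M*CD := by positivity
      linarith
    · exact hSup
  have eop : hatHJBop d M f u t η =
      -(deriv (fun s => u s η) t) + ∑ i, m i * hatHam d M f i t η p := rfl
  rw [eop]
  calc |(-(deriv (fun s => u s η) t)) + ∑ i, m i * hatHam d M f i t η p|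
      ≤ |(-(deriv (fun s => u s η) t))| + |∑ i, m i * hatHam d M f i t η p| := abs_add_le _ _
    _ ≤ CD + (2*d*M*CD + BF) := by
        rw [abs_neg]
        exact add_le_add h1 habs

end DGM

/-- main convergence theorem: under Assumptions (A) and (B), if `V̂` is a
classical solution of the transformed HJB equation and `φ̂ⁿ` are `C¹` functions whose DGM
L∞-loss tends to zero, then `φ̂ⁿ → V̂` uniformly on `[0,T] × Ŝ_d`. -/
theorem dgm_uniform_convergence (d : ℕ) (hd : 2 ≤ d) (T : ℝ) (hT : 0 < T) (M : ℝ) (hM : 0 < M)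
    (f : ℝ → Fin d → EuclideanSpace ℝ (Fin d) → EuclideanSpace ℝ (Fin d) → ℝ)
    (hfA : AssumptionA d T M f) (hfB : AssumptionB d T M f)
    (g : Fin d → EuclideanSpace ℝ (Fin d) → ℝ) (hg : ∀ i, ContinuousOn (g i) (simplexSet d))
    (Vhat : ℝ → EuclideanSpace ℝ (Fin (d - 1)) → ℝ) (hVhat : hatC1OnNbhd d T Vhat)
    (hVpde : ∀ t ∈ Set.Icc (0:ℝ) T, ∀ η ∈ hatSimplexSet d, hatHJBop d M f Vhat t η = 0)
    (hVterm : ∀ η ∈ hatSimplexSet d, Vhat T η = hatG d g η)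
    (φhat : ℕ → ℝ → EuclideanSpace ℝ (Fin (d - 1)) → ℝ)
    (hφhat : ∀ n, hatC1OnNbhd d T (φhat n))
    (hloss : Filter.Tendsto (fun n : ℕ =>
        sSup ((fun p : ℝ × EuclideanSpace ℝ (Fin (d - 1)) =>
            |hatHJBop d M f (φhat n) p.1 p.2|) '' (Set.Icc (0:ℝ) T ×ˢ hatSimplexSet d)) +
        sSup ((fun η => |φhat n T η - hatG d g η|) '' hatSimplexSet d))
      Filter.atTop (𝓝 0)) :
    Filter.Tendsto (fun n : ℕ =>
        sSup ((fun p : ℝ × EuclideanSpace ℝ (Fin (d - 1)) =>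
            |φhat n p.1 p.2 - Vhat p.1 p.2|) '' (Set.Icc (0:ℝ) T ×ˢ hatSimplexSet d)))
      Filter.atTop (𝓝 0) := by
  classical
  have hd1 : 1 ≤ d := by omega
  have hTK : ((T, (0 : EuclideanSpace ℝ (Fin (d - 1)))) : ℝ × EuclideanSpace ℝ (Fin (d - 1))) ∈
      Set.Icc (0:ℝ) T ×ˢ hatSimplexSet d :=
    Set.mem_prod.mpr ⟨⟨hT.le, le_rfl⟩, DGM.zero_mem_hatSimplex d⟩
  -- bounds via sSup for the residuals
  have hbddA : ∀ n, BddAbove ((fun p : ℝ × EuclideanSpace ℝ (Fin (d - 1)) =>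
      |hatHJBop d M f (φhat n) p.1 p.2|) '' (Set.Icc (0:ℝ) T ×ˢ hatSimplexSet d)) := by
    intro n
    obtain ⟨C, hC⟩ := DGM.opBound d hd T hT M hM f hfA.1 hfB.1 (φhat n) (hφhat n)
    exact ⟨C, by rintro _ ⟨⟨t, η⟩, hm, rfl⟩; exact hC t hm.1 η hm.2⟩
  have hApt : ∀ n, ∀ t ∈ Set.Icc (0:ℝ) T, ∀ η ∈ hatSimplexSet d,
      |hatHJBop d M f (φhat n) t η| ≤
        sSup ((fun p : ℝ × EuclideanSpace ℝ (Fin (d - 1)) =>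
          |hatHJBop d M f (φhat n) p.1 p.2|) '' (Set.Icc (0:ℝ) T ×ˢ hatSimplexSet d)) :=
    fun n t ht η hη => le_csSup (hbddA n) ⟨(t, η), Set.mem_prod.mpr ⟨ht, hη⟩, rfl⟩
  have hGcont := DGM.continuousOn_hatG d hd1 g hg
  have hbddB : ∀ n, BddAbove ((fun η => |φhat n T η - hatG d g η|) '' hatSimplexSet d) := by
    intro n
    obtain ⟨U, hUo, hUs, hC⟩ := hφhat n
    have hφc : ContinuousOn (fun η => φhat n T η) (hatSimplexSet d) := by
      have hmap : Set.MapsTo (fun η : EuclideanSpace ℝ (Fin (d - 1)) => ((T : ℝ), η))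
          (hatSimplexSet d) U :=
        fun η hη => hUs (Set.mem_prod.mpr ⟨⟨hT.le, le_rfl⟩, hη⟩)
      exact hC.continuousOn.comp
        ((continuous_const.prodMk continuous_id).continuousOn) hmap
    obtain ⟨C, hC'⟩ := (DGM.isCompact_hatSimplex d).exists_bound_of_continuousOn
      (hφc.sub hGcont)
    exact ⟨C, by rintro _ ⟨η, hη, rfl⟩; simpa [Real.norm_eq_abs] using hC' η hη⟩
  have hBpt : ∀ n, ∀ η ∈ hatSimplexSet d, |φhat n T η - hatG d g η| ≤
      sSup ((fun η => |φhat n T η - hatG d g η|) '' hatSimplexSet d) :=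
    fun n η hη => le_csSup (hbddB n) ⟨η, hη, rfl⟩
  have hVL : ∀ t ∈ Set.Icc (0:ℝ) T, ∀ η ∈ hatSimplexSet d,
      |hatHJBop d M f Vhat t η| ≤ (0:ℝ) := by
    intro t ht η hη
    rw [hVpde t ht η hη]
    simp
  have hε0 : ∀ n, 0 ≤ sSup ((fun p : ℝ × EuclideanSpace ℝ (Fin (d - 1)) =>
      |hatHJBop d M f (φhat n) p.1 p.2|) '' (Set.Icc (0:ℝ) T ×ˢ hatSimplexSet d)) :=
    fun n => le_trans (abs_nonneg _) (hApt n T ⟨hT.le, le_rfl⟩ 0 (DGM.zero_mem_hatSimplex d))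
  have hδ0 : ∀ n, 0 ≤ sSup ((fun η => |φhat n T η - hatG d g η|) '' hatSimplexSet d) :=
    fun n => le_trans (abs_nonneg _) (hBpt n 0 (DGM.zero_mem_hatSimplex d))
  have hcomp1 : ∀ n, ∀ t ∈ Set.Icc (0:ℝ) T, ∀ η ∈ hatSimplexSet d,
      φhat n t η - Vhat t η ≤
        sSup ((fun η => |φhat n T η - hatG d g η|) '' hatSimplexSet d) +
        (sSup ((fun p : ℝ × EuclideanSpace ℝ (Fin (d - 1)) =>
          |hatHJBop d M f (φhat n) p.1 p.2|) '' (Set.Icc (0:ℝ) T ×ˢ hatSimplexSet d)) + 0)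
          * (T - t) := by
    intro n
    refine DGM.comparison d hd T hT M hM f hfB.1 (φhat n) Vhat (hφhat n) hVhat
      _ 0 _ (hApt n) hVL ?_
    intro η hη
    rw [hVterm η hη]
    exact le_trans (le_abs_self _) (hBpt n η hη)
  have hcomp2 : ∀ n, ∀ t ∈ Set.Icc (0:ℝ) T, ∀ η ∈ hatSimplexSet d,
      Vhat t η - φhat n t η ≤
        sSup ((fun η => |φhat n T η - hatG d g η|) '' hatSimplexSet d) +
        (0 + sSup ((fun p : ℝ × EuclideanSpace ℝ (Fin (d - 1)) =>
          |hatHJBop d M f (φhat n) p.1 p.2|) '' (Set.Icc (0:ℝ) T ×ˢ hatSimplexSet d)))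
          * (T - t) := by
    intro n
    refine DGM.comparison d hd T hT M hM f hfB.1 Vhat (φhat n) hVhat (hφhat n)
      0 _ _ hVL (hApt n) ?_
    intro η hη
    rw [hVterm η hη]
    have h1 := hBpt n η hη
    have h2 := neg_abs_le (φhat n T η - hatG d g η)
    linarith
  have hptbound : ∀ n, ∀ x ∈ ((fun p : ℝ × EuclideanSpace ℝ (Fin (d - 1)) =>
      |φhat n p.1 p.2 - Vhat p.1 p.2|) '' (Set.Icc (0:ℝ) T ×ˢ hatSimplexSet d)),
      x ≤ sSup ((fun η => |φhat n T η - hatG d g η|) '' hatSimplexSet d) +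
        sSup ((fun p : ℝ × EuclideanSpace ℝ (Fin (d - 1)) =>
          |hatHJBop d M f (φhat n) p.1 p.2|) '' (Set.Icc (0:ℝ) T ×ˢ hatSimplexSet d)) * T := by
    rintro n x ⟨⟨t, η⟩, hm, rfl⟩
    have h1 := hcomp1 n t hm.1 η hm.2
    have h2 := hcomp2 n t hm.1 η hm.2
    have hA0 := hε0 n
    have hTt : T - t ≤ T := by linarith [hm.1.1]
    have hTt0 : 0 ≤ T - t := by linarith [hm.1.2]
    have hmul : sSup ((fun p : ℝ × EuclideanSpace ℝ (Fin (d - 1)) =>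
        |hatHJBop d M f (φhat n) p.1 p.2|) '' (Set.Icc (0:ℝ) T ×ˢ hatSimplexSet d)) * (T - t) ≤
        sSup ((fun p : ℝ × EuclideanSpace ℝ (Fin (d - 1)) =>
        |hatHJBop d M f (φhat n) p.1 p.2|) '' (Set.Icc (0:ℝ) T ×ˢ hatSimplexSet d)) * T :=
      mul_le_mul_of_nonneg_left hTt hA0
    rw [abs_le]
    constructor <;> [linarith; linarith]
  have hub : ∀ n, sSup ((fun p : ℝ × EuclideanSpace ℝ (Fin (d - 1)) =>
      |φhat n p.1 p.2 - Vhat p.1 p.2|) '' (Set.Icc (0:ℝ) T ×ˢ hatSimplexSet d)) ≤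
      sSup ((fun η => |φhat n T η - hatG d g η|) '' hatSimplexSet d) +
        sSup ((fun p : ℝ × EuclideanSpace ℝ (Fin (d - 1)) =>
          |hatHJBop d M f (φhat n) p.1 p.2|) '' (Set.Icc (0:ℝ) T ×ˢ hatSimplexSet d)) * T :=
    fun n => csSup_le ⟨_, ⟨(T, 0), hTK, rfl⟩⟩ (hptbound n)
  have hlb : ∀ n, 0 ≤ sSup ((fun p : ℝ × EuclideanSpace ℝ (Fin (d - 1)) =>
      |φhat n p.1 p.2 - Vhat p.1 p.2|) '' (Set.Icc (0:ℝ) T ×ˢ hatSimplexSet d)) :=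
    fun n => le_trans (abs_nonneg _)
      (le_csSup ⟨_, hptbound n⟩ ⟨(T, 0), hTK, rfl⟩)
  have hg2 : ∀ n, sSup ((fun p : ℝ × EuclideanSpace ℝ (Fin (d - 1)) =>
      |φhat n p.1 p.2 - Vhat p.1 p.2|) '' (Set.Icc (0:ℝ) T ×ˢ hatSimplexSet d)) ≤
      (1 + T) * (sSup ((fun p : ℝ × EuclideanSpace ℝ (Fin (d - 1)) =>
          |hatHJBop d M f (φhat n) p.1 p.2|) '' (Set.Icc (0:ℝ) T ×ˢ hatSimplexSet d)) +
        sSup ((fun η => |φhat n T η - hatG d g η|) '' hatSimplexSet d)) := by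
    intro n
    have h1 := hub n
    have hA0 := hε0 n
    have hB0 := hδ0 n
    nlinarith
  have hten : Filter.Tendsto (fun n => (1 + T) * (sSup ((fun p : ℝ × EuclideanSpace ℝ (Fin (d - 1)) =>
      |hatHJBop d M f (φhat n) p.1 p.2|) '' (Set.Icc (0:ℝ) T ×ˢ hatSimplexSet d)) +
      sSup ((fun η => |φhat n T η - hatG d g η|) '' hatSimplexSet d))) Filter.atTop (𝓝 0) := by
    have := hloss.const_mul (1 + T)
    simpa using this
  exact squeeze_zero hlb hg2 hten
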